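/- Let g̃ = 2ρ dt² + 2t dρ dt + t² g_ρ on ℝ₊ × M × (-ε,ε) with g_ρ a family of metrics on M, and let f̃ = t f_ρ with f_ρ a family of positive functions. Then the components (Ric̃_φ^m)_{0I} of the Bakry–Émery Ricci tensor Ric(g̃) - (m/f̃)∇̃²f̃ vanish for all indices I, where 0 denotes the t-direction. -/

import Mathlib

open Matrix BigOperators

noncomputable section

/-- A metric (or 2-tensor) field on a coordinate patch of `ℝⁿ`, given by its
component matrix at each point. -/
abbrev MetricField (n : ℕ) := (Fin n → ℝ) → Matrix (Fin n) (Fin n) ℝ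

/-- Partial derivative of a scalar function in the `i`-th coordinate direction. -/
def pd {n : ℕ} (i : Fin n) (h : (Fin n → ℝ) → ℝ) (x : Fin n → ℝ) : ℝ :=
  fderiv ℝ h x (Pi.single i 1)

/-- Christoffel symbols of the first kind `Γ_{ijk}`. -/
def ChristoffelLow {n : ℕ} (g : MetricField n) (i j k : Fin n) (x : Fin n → ℝ) : ℝ :=
  (pd i (fun y => g y j k) x + pd j (fun y => g y i k) x - pd k (fun y => g y i j) x) / 2

/-- Christoffel symbols of the second kind `Γ^l_{ij}`. -/
def Christoffel {n : ℕ} (g : MetricField n) (l i j : Fin n) (x : Fin n → ℝ) : ℝ :=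
  ∑ k, (g x)⁻¹ l k * ChristoffelLow g i j k x

/-- Riemann curvature tensor `R^l_{ijk}` (type (1,3)). -/
def RiemannUp {n : ℕ} (g : MetricField n) (l i j k : Fin n) (x : Fin n → ℝ) : ℝ :=
  pd j (fun y => Christoffel g l k i y) x - pd k (fun y => Christoffel g l j i y) x
    + ∑ p, Christoffel g l j p x * Christoffel g p k i x
    - ∑ p, Christoffel g l k p x * Christoffel g p j i x

/-- Riemann curvature tensor `R_{ijkl}` (type (0,4)). -/
def RiemannLow {n : ℕ} (g : MetricField n) (i j k l : Fin n) (x : Fin n → ℝ) : ℝ :=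
  ∑ m, g x i m * RiemannUp g m j k l x

/-- Ricci tensor `R_{ij} = ∂_L Γ^L_{ij} - ∂_i Γ^L_{Lj} + Γ^P_{ij} Γ^L_{LP} - Γ^P_{Lj} Γ^L_{iP}`. -/
def RicciT {n : ℕ} (g : MetricField n) (i j : Fin n) (x : Fin n → ℝ) : ℝ :=
  (∑ l, pd l (fun y => Christoffel g l i j y) x)
    - (∑ l, pd i (fun y => Christoffel g l l j y) x)
    + (∑ p, ∑ l, Christoffel g p i j x * Christoffel g l l p x)
    - (∑ p, ∑ l, Christoffel g p l j x * Christoffel g l i p x)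

/-- Covariant Hessian `(∇²f)_{ij}` with respect to the metric `g`. -/
def HessT {n : ℕ} (g : MetricField n) (f : (Fin n → ℝ) → ℝ) (i j : Fin n) (x : Fin n → ℝ) : ℝ :=
  pd i (fun y => pd j f y) x - ∑ k, Christoffel g k i j x * pd k f x

/-- Laplacian `Δf = g^{ij}(∇²f)_{ij}`. -/
def LapT {n : ℕ} (g : MetricField n) (f : (Fin n → ℝ) → ℝ) (x : Fin n → ℝ) : ℝ :=
  ∑ i, ∑ j, (g x)⁻¹ i j * HessT g f i j x

/-- Squared gradient norm `|∇f|² = g^{ij} ∂_i f ∂_j f`. -/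
def GradSq {n : ℕ} (g : MetricField n) (f : (Fin n → ℝ) → ℝ) (x : Fin n → ℝ) : ℝ :=
  ∑ i, ∑ j, (g x)⁻¹ i j * pd i f x * pd j f x

/-- Scalar curvature `R = g^{ij} R_{ij}`. -/
def ScalarT {n : ℕ} (g : MetricField n) (x : Fin n → ℝ) : ℝ :=
  ∑ i, ∑ j, (g x)⁻¹ i j * RicciT g i j x

/-- Bakry–Émery Ricci tensor `Ric - (m/f) ∇²f`. -/
def BERic {n : ℕ} (g : MetricField n) (m : ℝ) (f : (Fin n → ℝ) → ℝ) (i j : Fin n)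
    (x : Fin n → ℝ) : ℝ :=
  RicciT g i j x - (m / f x) * HessT g f i j x

/-- The weighted quantity `F_φ^m = f Δf + (m-1)(|∇f|² - μ)`. -/
def Fphi {n : ℕ} (g : MetricField n) (m μ : ℝ) (f : (Fin n → ℝ) → ℝ) (x : Fin n → ℝ) : ℝ :=
  f x * LapT g f x + (m - 1) * (GradSq g f x - μ)

/-- The weighted scalar curvature `R_φ^m = R - (2m/f)Δf - (m(m-1)/f²)(|∇f|² - μ)`. -/
def Rphi {n : ℕ} (g : MetricField n) (m μ : ℝ) (f : (Fin n → ℝ) → ℝ) (x : Fin n → ℝ) : ℝ :=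
  ScalarT g x - (2 * m / f x) * LapT g f x
    - (m * (m - 1) / (f x) ^ 2) * (GradSq g f x - μ)

/-- Covariant derivative `∇_k P_{ij}` of a 2-tensor field `P` with respect to `g`. -/
def CovD2 {n : ℕ} (g P : MetricField n) (k i j : Fin n) (x : Fin n → ℝ) : ℝ :=
  pd k (fun y => P y i j) x - (∑ l, Christoffel g l k i x * P x l j)
    - (∑ l, Christoffel g l k j x * P x i l)

/-- Embedding of the `M`-indices into the ambient indices `{0} ∪ M ∪ {∞}`:
index `0` is the `t`-direction and `Fin.last (d+1)` is the `ρ`-direction. -/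
def emb {d : ℕ} (i : Fin d) : Fin (d + 2) := i.succ.castSucc

/-- The `M`-coordinates of an ambient point. -/
def mcoord {d : ℕ} (x : Fin (d + 2) → ℝ) : Fin d → ℝ := fun i => x (emb i)

/-- The straight and normal ambient metric `g̃ = 2ρ dt² + 2t dρ dt + t² g_ρ` built from a
one-parameter family `g_ρ` of metrics on `M`; coordinates `(t, x, ρ)` with `t` indexed by `0`
and `ρ` indexed by `Fin.last (d+1)`. -/
def ambMetric {d : ℕ} (gf : ℝ → (Fin d → ℝ) → Matrix (Fin d) (Fin d) ℝ) :
    MetricField (d + 2) := fun x =>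
  Matrix.of fun I J =>
    (if I = 0 ∧ J = 0 then 2 * x (Fin.last (d + 1)) else 0)
      + (if (I = 0 ∧ J = Fin.last (d + 1)) ∨ (I = Fin.last (d + 1) ∧ J = 0) then x 0 else 0)
      + (x 0) ^ 2 * ∑ i, ∑ j,
          (if I = emb i ∧ J = emb j then gf (x (Fin.last (d + 1))) (mcoord x) i j else 0)

/-- The ambient weighted function `f̃ = t f_ρ`. -/
def ambF {d : ℕ} (ff : ℝ → (Fin d → ℝ) → ℝ) (x : Fin (d + 2) → ℝ) : ℝ :=
  x 0 * ff (x (Fin.last (d + 1))) (mcoord x)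

/-- The cone metric `g̃ = -ds² + s² g₊` on `ℝ₊ × M` where `M` is `(d+1)`-dimensional;
the coordinate `s` is indexed by `0`. -/
def coneMetric {d : ℕ}
    (gp : (Fin (d + 1) → ℝ) → Matrix (Fin (d + 1)) (Fin (d + 1)) ℝ) :
    MetricField (d + 2) := fun x =>
  Matrix.of fun I J =>
    (if I = 0 ∧ J = 0 then -1 else 0)
      + (x 0) ^ 2 * ∑ i, ∑ j,
          (if I = Fin.succ i ∧ J = Fin.succ j then gp (x ∘ Fin.succ) i j else 0)

/-- The cone weighted function `f̃ = s f₊`. -/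
def coneF {d : ℕ} (fp : (Fin (d + 1) → ℝ) → ℝ) (x : Fin (d + 2) → ℝ) : ℝ :=
  x 0 * fp (x ∘ Fin.succ)

namespace SN
variable {d : ℕ}

lemma emb_ne_zero (i : Fin d) : emb i ≠ 0 := by
  simp [emb, Fin.ext_iff]
lemma emb_ne_last (i : Fin d) : emb i ≠ Fin.last (d+1) := by
  simp [emb, Fin.ext_iff]; omega
lemma last_ne_zero' : (Fin.last (d+1) : Fin (d+2)) ≠ 0 := by
  simp [Fin.ext_iff]
lemma zero_ne_emb (i : Fin d) : (0 : Fin (d+2)) ≠ emb i := (emb_ne_zero i).symm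
lemma last_ne_emb (i : Fin d) : (Fin.last (d+1) : Fin (d+2)) ≠ emb i := (emb_ne_last i).symm
lemma zero_ne_last : (0 : Fin (d+2)) ≠ Fin.last (d+1) := last_ne_zero'.symm

lemma emb_inj {i j : Fin d} (h : emb i = emb j) : i = j := by
  simpa [emb, Fin.ext_iff] using h

lemma sum_decomp (f : Fin (d+2) → ℝ) :
    ∑ K, f K = f 0 + (∑ k : Fin d, f (emb k)) + f (Fin.last (d+1)) := by
  rw [Fin.sum_univ_succ, Fin.sum_univ_castSucc]
  simp only [Fin.succ_castSucc, Fin.succ_last]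
  show f 0 + (∑ x : Fin d, f (emb x) + f (Fin.last (d+1))) = _
  ring

lemma cases3 (I : Fin (d+2)) : I = 0 ∨ (∃ i, I = emb i) ∨ I = Fin.last (d+1) := by
  rcases Fin.eq_zero_or_eq_succ I with h | ⟨j, rfl⟩
  · exact Or.inl h
  · rcases Fin.eq_castSucc_or_eq_last j with ⟨i, rfl⟩ | rfl
    · exact Or.inr (Or.inl ⟨i, by ext; simp [emb]⟩)
    · exact Or.inr (Or.inr (by simp [Fin.succ_last]))


variable (gf : ℝ → (Fin d → ℝ) → Matrix (Fin d) (Fin d) ℝ)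

lemma sumIJ_zero_left (c : Fin d → Fin d → ℝ) {I J : Fin (d+2)} (h : ∀ i, I ≠ emb i) :
    (∑ i, ∑ j, (if I = emb i ∧ J = emb j then c i j else 0)) = 0 := by
  apply Finset.sum_eq_zero; intro i _
  apply Finset.sum_eq_zero; intro j _
  simp [h i]

lemma sumIJ_zero_right (c : Fin d → Fin d → ℝ) {I J : Fin (d+2)} (h : ∀ j, J ≠ emb j) :
    (∑ i, ∑ j, (if I = emb i ∧ J = emb j then c i j else 0)) = 0 := by
  apply Finset.sum_eq_zero; intro i _
  apply Finset.sum_eq_zero; intro j _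
  simp [h j]

lemma sumIJ_emb (c : Fin d → Fin d → ℝ) (a b : Fin d) :
    (∑ i, ∑ j, (if emb a = emb i ∧ emb b = emb j then c i j else 0)) = c a b := by
  rw [Finset.sum_eq_single a]
  · rw [Finset.sum_eq_single b]
    · simp
    · intro j _ hj; rw [if_neg]; rintro ⟨-, h⟩; exact hj (emb_inj h).symm
    · simp
  · intro i _ hi
    apply Finset.sum_eq_zero; intro j _
    rw [if_neg]; rintro ⟨h, -⟩; exact hi (emb_inj h).symm
  · simp

-- entry lemmas
lemma amb_00 (y) : ambMetric gf y 0 0 = 2 * y (Fin.last (d+1)) := by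
  simp [ambMetric, emb_ne_zero, emb_ne_last, last_ne_zero', zero_ne_emb, last_ne_emb, zero_ne_last,
    sumIJ_zero_left _ (fun i => (emb_ne_zero i).symm)]
lemma amb_0z (y) : ambMetric gf y 0 (Fin.last (d+1)) = y 0 := by
  simp [ambMetric, emb_ne_zero, emb_ne_last, last_ne_zero', zero_ne_emb, last_ne_emb, zero_ne_last,
    sumIJ_zero_left _ (fun i => (emb_ne_zero i).symm)]
lemma amb_z0 (y) : ambMetric gf y (Fin.last (d+1)) 0 = y 0 := by
  simp [ambMetric, emb_ne_zero, emb_ne_last, last_ne_zero', zero_ne_emb, last_ne_emb, zero_ne_last,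
    sumIJ_zero_right _ (fun i => (emb_ne_zero i).symm)]
lemma amb_zz (y) : ambMetric gf y (Fin.last (d+1)) (Fin.last (d+1)) = 0 := by
  simp [ambMetric, emb_ne_zero, emb_ne_last, last_ne_zero', zero_ne_emb, last_ne_emb, zero_ne_last,
    sumIJ_zero_left _ (fun i => (emb_ne_last i).symm)]
lemma amb_0e (y) (j : Fin d) : ambMetric gf y 0 (emb j) = 0 := by
  simp [ambMetric, emb_ne_zero, emb_ne_last, last_ne_zero', zero_ne_emb, last_ne_emb, zero_ne_last,
    sumIJ_zero_left (I := (0 : Fin (d+2))) _ (fun i => (emb_ne_zero i).symm)]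
lemma amb_e0 (y) (j : Fin d) : ambMetric gf y (emb j) 0 = 0 := by
  simp [ambMetric, emb_ne_zero, emb_ne_last, last_ne_zero', zero_ne_emb, last_ne_emb, zero_ne_last,
    sumIJ_zero_right _ (fun i => (emb_ne_zero i).symm)]
lemma amb_ze (y) (j : Fin d) : ambMetric gf y (Fin.last (d+1)) (emb j) = 0 := by
  simp [ambMetric, emb_ne_zero, emb_ne_last, last_ne_zero', zero_ne_emb, last_ne_emb, zero_ne_last,
    sumIJ_zero_left _ (fun i => (emb_ne_last i).symm)]
lemma amb_ez (y) (j : Fin d) : ambMetric gf y (emb j) (Fin.last (d+1)) = 0 := by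
  simp [ambMetric, emb_ne_zero, emb_ne_last, last_ne_zero', zero_ne_emb, last_ne_emb, zero_ne_last,
    sumIJ_zero_right _ (fun i => (emb_ne_last i).symm)]
lemma amb_ee (y) (i j : Fin d) :
    ambMetric gf y (emb i) (emb j) = (y 0)^2 * gf (y (Fin.last (d+1))) (mcoord y) i j := by
  simp [ambMetric, emb_ne_zero, emb_ne_last, last_ne_zero', zero_ne_emb, last_ne_emb, zero_ne_last,
    sumIJ_emb]
  left; exact sumIJ_emb _ i j

lemma amb_symm (hgsym : ∀ ρ y, (gf ρ y).IsSymm) (y) (I J : Fin (d+2)) :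
    ambMetric gf y I J = ambMetric gf y J I := by
  rcases cases3 I with rfl | ⟨i, rfl⟩ | rfl <;> rcases cases3 J with rfl | ⟨j, rfl⟩ | rfl <;>
    simp [amb_00, amb_0z, amb_z0, amb_zz, amb_0e, amb_e0, amb_ze, amb_ez, amb_ee]
  left; exact ((hgsym _ _).apply _ _).symm


def phiL (d : ℕ) : (Fin (d+2) → ℝ) →L[ℝ] ℝ × (Fin d → ℝ) :=
  (ContinuousLinearMap.proj (Fin.last (d+1))).prod
    (ContinuousLinearMap.pi fun i => ContinuousLinearMap.proj (emb i))

lemma phiL_apply (y : Fin (d+2) → ℝ) : phiL d y = (y (Fin.last (d+1)), mcoord y) := rfl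

lemma phiL_single_zero : phiL d (Pi.single (0 : Fin (d+2)) 1) = 0 := by
  rw [phiL_apply]
  refine Prod.ext ?_ ?_
  · simp [Pi.single_apply, last_ne_zero']
  · funext i; simp [mcoord, Pi.single_apply, emb_ne_zero]

lemma pd_coord (A B : Fin (d+2)) (y : Fin (d+2) → ℝ) :
    pd A (fun y => y B) y = if B = A then 1 else 0 := by
  have h : (fun y : Fin (d+2) → ℝ => y B)
      = (ContinuousLinearMap.proj B : (Fin (d+2) → ℝ) →L[ℝ] ℝ) := rfl
  rw [pd, h, ContinuousLinearMap.fderiv]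
  simp [Pi.single_apply]

lemma pd_zero_fun (A : Fin (d+2)) (y : Fin (d+2) → ℝ) : pd A (fun _ => (0:ℝ)) y = 0 := by
  rw [pd, fderiv_fun_const]; simp

lemma pd_two_mul (A B : Fin (d+2)) (y : Fin (d+2) → ℝ) :
    pd A (fun y => 2 * y B) y = if B = A then 2 else 0 := by
  have h : (fun y : Fin (d+2) → ℝ => 2 * y B)
      = ((2:ℝ) • (ContinuousLinearMap.proj B : (Fin (d+2) → ℝ) →L[ℝ] ℝ) :
          (Fin (d+2) → ℝ) →L[ℝ] ℝ) := by
    funext v; simp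
  rw [pd, h, ContinuousLinearMap.fderiv]
  simp [Pi.single_apply]

def Gf (i j : Fin d) : ℝ × (Fin d → ℝ) → ℝ := fun p => gf p.1 p.2 i j

def Gd (A : Fin (d+2)) (i j : Fin d) : ℝ × (Fin d → ℝ) → ℝ :=
  fun p => fderiv ℝ (Gf gf i j) p (phiL d (Pi.single A 1))

lemma Gd_zero (i j : Fin d) (p : ℝ × (Fin d → ℝ)) : Gd gf 0 i j p = 0 := by
  rw [Gd, phiL_single_zero]; simp

lemma amb_ee_fun (i j : Fin d) : (fun y => ambMetric gf y (emb i) (emb j))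
    = fun y => y 0 * y 0 * Gf gf i j (phiL d y) := by
  funext y; rw [amb_ee]
  show _ = y 0 * y 0 * gf (y (Fin.last (d+1))) (mcoord y) i j
  ring

lemma hasFDeriv_ee (hgs : ∀ i j, ContDiff ℝ (⊤ : ℕ∞) fun p : ℝ × (Fin d → ℝ) => gf p.1 p.2 i j)
    (i j : Fin d) (y : Fin (d+2) → ℝ) :
    HasFDerivAt (fun y => ambMetric gf y (emb i) (emb j))
      ((y 0 * y 0) • ((fderiv ℝ (Gf gf i j) (phiL d y)).comp (phiL d))
        + (Gf gf i j (phiL d y)) • ((y 0) • (ContinuousLinearMap.proj 0 :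
            (Fin (d+2) → ℝ) →L[ℝ] ℝ) + (y 0) • ContinuousLinearMap.proj 0)) y := by
  rw [amb_ee_fun]
  have hp : HasFDerivAt (fun y : Fin (d+2) → ℝ => y 0)
      (ContinuousLinearMap.proj 0 : (Fin (d+2) → ℝ) →L[ℝ] ℝ) y :=
    (ContinuousLinearMap.proj 0 : (Fin (d+2) → ℝ) →L[ℝ] ℝ).hasFDerivAt
  have hG : HasFDerivAt (fun y => Gf gf i j (phiL d y))
      ((fderiv ℝ (Gf gf i j) (phiL d y)).comp (phiL d)) y :=
    (((hgs i j).differentiable (by simp) (phiL d y)).hasFDerivAt).comp y (phiL d).hasFDerivAt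
  exact (hp.mul hp).mul hG

lemma pd_ee (hgs : ∀ i j, ContDiff ℝ (⊤ : ℕ∞) fun p : ℝ × (Fin d → ℝ) => gf p.1 p.2 i j)
    (A : Fin (d+2)) (i j : Fin d) (y : Fin (d+2) → ℝ) :
    pd A (fun y => ambMetric gf y (emb i) (emb j)) y
      = (y 0 * y 0) * Gd gf A i j (phiL d y)
        + 2 * y 0 * (if (0:Fin (d+2)) = A then 1 else 0) * Gf gf i j (phiL d y) := by
  rw [pd, (hasFDeriv_ee gf hgs i j y).fderiv]
  simp [Gd, Pi.single_apply]
  split <;> ring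

lemma pd_ee_zero (hgs : ∀ i j, ContDiff ℝ (⊤ : ℕ∞) fun p : ℝ × (Fin d → ℝ) => gf p.1 p.2 i j)
    (i j : Fin d) (y : Fin (d+2) → ℝ) :
    pd 0 (fun y => ambMetric gf y (emb i) (emb j)) y
      = 2 * y 0 * Gf gf i j (phiL d y) := by
  rw [pd_ee gf hgs, Gd_zero]; simp


-- pd of metric entry functions
lemma pd_g00 (A : Fin (d+2)) (y) : pd A (fun y => ambMetric gf y 0 0) y
    = if Fin.last (d+1) = A then 2 else 0 := by
  have h : (fun y => ambMetric gf y 0 0) = fun y : Fin (d+2) → ℝ => 2 * y (Fin.last (d+1)) :=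
    funext (amb_00 gf)
  rw [h, pd_two_mul]
lemma pd_g0z (A : Fin (d+2)) (y) : pd A (fun y => ambMetric gf y 0 (Fin.last (d+1))) y
    = if (0:Fin (d+2)) = A then 1 else 0 := by
  have h : (fun y => ambMetric gf y 0 (Fin.last (d+1))) = fun y : Fin (d+2) → ℝ => y 0 :=
    funext (amb_0z gf)
  rw [h, pd_coord]
lemma pd_gz0 (A : Fin (d+2)) (y) : pd A (fun y => ambMetric gf y (Fin.last (d+1)) 0) y
    = if (0:Fin (d+2)) = A then 1 else 0 := by
  have h : (fun y => ambMetric gf y (Fin.last (d+1)) 0) = fun y : Fin (d+2) → ℝ => y 0 :=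
    funext (amb_z0 gf)
  rw [h, pd_coord]
lemma pd_gzz (A : Fin (d+2)) (y) : pd A (fun y => ambMetric gf y (Fin.last (d+1)) (Fin.last (d+1))) y = 0 := by
  have h : (fun y => ambMetric gf y (Fin.last (d+1)) (Fin.last (d+1))) = fun _ : Fin (d+2) → ℝ => (0:ℝ) :=
    funext (amb_zz gf)
  rw [h, pd_zero_fun]
lemma pd_g0e (A : Fin (d+2)) (j : Fin d) (y) : pd A (fun y => ambMetric gf y 0 (emb j)) y = 0 := by
  have h : (fun y => ambMetric gf y 0 (emb j)) = fun _ : Fin (d+2) → ℝ => (0:ℝ) :=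
    funext (fun y => amb_0e gf y j)
  rw [h, pd_zero_fun]
lemma pd_ge0 (A : Fin (d+2)) (j : Fin d) (y) : pd A (fun y => ambMetric gf y (emb j) 0) y = 0 := by
  have h : (fun y => ambMetric gf y (emb j) 0) = fun _ : Fin (d+2) → ℝ => (0:ℝ) :=
    funext (fun y => amb_e0 gf y j)
  rw [h, pd_zero_fun]
lemma pd_gze (A : Fin (d+2)) (j : Fin d) (y) : pd A (fun y => ambMetric gf y (Fin.last (d+1)) (emb j)) y = 0 := by
  have h : (fun y => ambMetric gf y (Fin.last (d+1)) (emb j)) = fun _ : Fin (d+2) → ℝ => (0:ℝ) :=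
    funext (fun y => amb_ze gf y j)
  rw [h, pd_zero_fun]
lemma pd_gez (A : Fin (d+2)) (j : Fin d) (y) : pd A (fun y => ambMetric gf y (emb j) (Fin.last (d+1))) y = 0 := by
  have h : (fun y => ambMetric gf y (emb j) (Fin.last (d+1))) = fun _ : Fin (d+2) → ℝ => (0:ℝ) :=
    funext (fun y => amb_ez gf y j)
  rw [h, pd_zero_fun]

lemma Gf_eval (i j : Fin d) (y : Fin (d+2) → ℝ) :
    Gf gf i j (phiL d y) = gf (y (Fin.last (d+1))) (mcoord y) i j := rfl

-- the key ChristoffelLow identity for the first row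
lemma CL0 (hgs : ∀ i j, ContDiff ℝ (⊤ : ℕ∞) fun p : ℝ × (Fin d → ℝ) => gf p.1 p.2 i j)
    (I K : Fin (d+2)) (y : Fin (d+2) → ℝ) :
    ChristoffelLow (ambMetric gf) 0 I K y * y 0
      = ambMetric gf y I K - (if I = 0 then ambMetric gf y 0 K else 0) := by
  rcases cases3 I with rfl | ⟨i, rfl⟩ | rfl <;> rcases cases3 K with rfl | ⟨j, rfl⟩ | rfl
  · simp only [ChristoffelLow, pd_g00]
    simp [zero_ne_last]
  · simp only [ChristoffelLow, pd_g0e, pd_g00]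
    simp [last_ne_emb, amb_0e]
  · simp only [ChristoffelLow, pd_g0z, pd_g00]
    simp [amb_0z]
    left; norm_num
  · simp only [ChristoffelLow, pd_ge0, pd_g00, pd_g0e]
    simp [zero_ne_emb, emb_ne_zero, last_ne_emb, amb_e0]
  · simp only [ChristoffelLow, pd_ee_zero gf hgs, pd_g0e]
    simp [zero_ne_emb, emb_ne_zero, amb_ee, Gf_eval]; ring
  · simp only [ChristoffelLow, pd_gez, pd_g0z, pd_g0e]
    simp [zero_ne_emb, emb_ne_zero, amb_ez]
  · simp only [ChristoffelLow, pd_gz0, pd_g00, pd_g0z]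
    simp [zero_ne_last, amb_z0]
  · simp only [ChristoffelLow, pd_gze, pd_g0e, pd_g0z]
    simp [zero_ne_last, zero_ne_emb, amb_ze]
  · simp only [ChristoffelLow, pd_gzz, pd_g0z]
    simp [zero_ne_last, amb_zz]


lemma CL_symm (g : MetricField (d+2)) (hsym : ∀ y I J, g y I J = g y J I)
    (i j k : Fin (d+2)) (y : Fin (d+2) → ℝ) :
    ChristoffelLow g i j k y = ChristoffelLow g j i k y := by
  unfold ChristoffelLow
  have h : (fun y => g y i j) = fun y => g y j i := funext fun y => hsym y i j
  rw [h]; ring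

def ginvM (gf : ℝ → (Fin d → ℝ) → Matrix (Fin d) (Fin d) ℝ) (y : Fin (d+2) → ℝ) :
    Matrix (Fin (d+2)) (Fin (d+2)) ℝ :=
  Matrix.of fun I J =>
    (if (I = 0 ∧ J = Fin.last (d+1)) ∨ (I = Fin.last (d+1) ∧ J = 0) then (y 0)⁻¹ else 0)
      + (if I = Fin.last (d+1) ∧ J = Fin.last (d+1) then -2 * y (Fin.last (d+1)) / (y 0)^2 else 0)
      + ((y 0)^2)⁻¹ * ∑ i, ∑ j,
          (if I = emb i ∧ J = emb j then (gf (y (Fin.last (d+1))) (mcoord y))⁻¹ i j else 0)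

lemma ginv_00 (y) : ginvM gf y 0 0 = 0 := by
  simp [ginvM, zero_ne_last, last_ne_zero',
    sumIJ_zero_left _ (fun i => zero_ne_emb i)]
  right; exact sumIJ_zero_left _ (fun i => zero_ne_emb i)
lemma ginv_0z (y) : ginvM gf y 0 (Fin.last (d+1)) = (y 0)⁻¹ := by
  simp [ginvM, zero_ne_last, sumIJ_zero_left _ (fun i => zero_ne_emb i)]
  right; exact sumIJ_zero_left _ (fun i => zero_ne_emb i)
lemma ginv_z0 (y) : ginvM gf y (Fin.last (d+1)) 0 = (y 0)⁻¹ := by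
  simp [ginvM, last_ne_zero', sumIJ_zero_right _ (fun i => zero_ne_emb i)]
  right; exact sumIJ_zero_right _ (fun i => zero_ne_emb i)
lemma ginv_zz (y) : ginvM gf y (Fin.last (d+1)) (Fin.last (d+1))
    = -2 * y (Fin.last (d+1)) / (y 0)^2 := by
  simp [ginvM, last_ne_zero', sumIJ_zero_left _ (fun i => last_ne_emb i)]
  right; exact sumIJ_zero_left _ (fun i => last_ne_emb i)
lemma ginv_0e (y) (j : Fin d) : ginvM gf y 0 (emb j) = 0 := by
  simp [ginvM, emb_ne_zero, emb_ne_last, zero_ne_last,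
    sumIJ_zero_left _ (fun i => zero_ne_emb i)]
  right; exact sumIJ_zero_left _ (fun i => zero_ne_emb i)
lemma ginv_e0 (y) (j : Fin d) : ginvM gf y (emb j) 0 = 0 := by
  simp [ginvM, emb_ne_zero, emb_ne_last, last_ne_zero',
    sumIJ_zero_right _ (fun i => zero_ne_emb i)]
  right; exact sumIJ_zero_right _ (fun i => zero_ne_emb i)
lemma ginv_ze (y) (j : Fin d) : ginvM gf y (Fin.last (d+1)) (emb j) = 0 := by
  simp [ginvM, emb_ne_zero, emb_ne_last, last_ne_zero',
    sumIJ_zero_left _ (fun i => last_ne_emb i)]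
  right; exact sumIJ_zero_left _ (fun i => last_ne_emb i)
lemma ginv_ez (y) (j : Fin d) : ginvM gf y (emb j) (Fin.last (d+1)) = 0 := by
  simp [ginvM, emb_ne_zero, emb_ne_last, zero_ne_last,
    sumIJ_zero_right _ (fun i => last_ne_emb i)]
  right; exact sumIJ_zero_right _ (fun i => last_ne_emb i)
lemma ginv_ee (y) (i j : Fin d) : ginvM gf y (emb i) (emb j)
    = ((y 0)^2)⁻¹ * (gf (y (Fin.last (d+1))) (mcoord y))⁻¹ i j := by
  simp [ginvM, emb_ne_zero, emb_ne_last, sumIJ_emb]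
  left; exact sumIJ_emb _ i j

lemma amb_mul_ginv (hgpos : ∀ ρ v, (gf ρ v).PosDef) (y : Fin (d+2) → ℝ) (hy : y 0 ≠ 0) :
    ambMetric gf y * ginvM gf y = 1 := by
  have hunit : IsUnit (gf (y (Fin.last (d+1))) (mcoord y)).det :=
    isUnit_iff_ne_zero.mpr (hgpos _ _).det_pos.ne'
  have hmulinv := Matrix.mul_nonsing_inv _ hunit
  ext I J
  rw [Matrix.mul_apply, sum_decomp]
  rcases cases3 I with rfl | ⟨i, rfl⟩ | rfl <;> rcases cases3 J with rfl | ⟨j, rfl⟩ | rfl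
  · simp [amb_00, amb_0e, amb_0z, ginv_00, ginv_e0, ginv_z0, Matrix.one_apply, hy]
  · simp [amb_00, amb_0e, amb_0z, ginv_0e, ginv_ee, ginv_ze, Matrix.one_apply, zero_ne_emb]
  · simp [amb_00, amb_0e, amb_0z, ginv_0z, ginv_ez, ginv_zz, Matrix.one_apply, zero_ne_last]
    field_simp; ring
  · simp [amb_e0, amb_ee, amb_ez, ginv_00, ginv_e0, ginv_z0, Matrix.one_apply, emb_ne_zero]
  · simp only [amb_e0, amb_ee, amb_ez, ginv_0e, ginv_ee, ginv_ze, zero_mul, mul_zero,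
      zero_add, add_zero]
    have : ∑ k : Fin d, (y 0)^2 * gf (y (Fin.last (d+1))) (mcoord y) i k
        * (((y 0)^2)⁻¹ * (gf (y (Fin.last (d+1))) (mcoord y))⁻¹ k j)
        = ∑ k : Fin d, gf (y (Fin.last (d+1))) (mcoord y) i k
            * (gf (y (Fin.last (d+1))) (mcoord y))⁻¹ k j := by
      apply Finset.sum_congr rfl; intro k _
      have h2 : (y 0)^2 * ((y 0)^2)⁻¹ = 1 := mul_inv_cancel₀ (pow_ne_zero 2 hy)
      calc (y 0)^2 * gf (y (Fin.last (d+1))) (mcoord y) i k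
            * (((y 0)^2)⁻¹ * (gf (y (Fin.last (d+1))) (mcoord y))⁻¹ k j)
          = ((y 0)^2 * ((y 0)^2)⁻¹) * (gf (y (Fin.last (d+1))) (mcoord y) i k
            * (gf (y (Fin.last (d+1))) (mcoord y))⁻¹ k j) := by ring
        _ = _ := by rw [h2, one_mul]
    rw [this, ← Matrix.mul_apply, hmulinv, Matrix.one_apply, Matrix.one_apply]
    by_cases h : i = j
    · simp [h]
    · rw [if_neg h, if_neg (fun hh => h (emb_inj hh))]
  · simp [amb_e0, amb_ee, amb_ez, ginv_0z, ginv_ez, ginv_zz, Matrix.one_apply, emb_ne_last]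
  · simp [amb_z0, amb_ze, amb_zz, ginv_00, ginv_e0, ginv_z0, Matrix.one_apply, last_ne_zero']
  · simp [amb_z0, amb_ze, amb_zz, ginv_0e, ginv_ee, ginv_ze, Matrix.one_apply, last_ne_emb]
  · simp [amb_z0, amb_ze, amb_zz, ginv_0z, ginv_ez, ginv_zz, Matrix.one_apply, hy]

lemma amb_isUnit_det (hgpos : ∀ ρ v, (gf ρ v).PosDef) (y : Fin (d+2) → ℝ) (hy : y 0 ≠ 0) :
    IsUnit (ambMetric gf y).det :=
  Matrix.isUnit_det_of_right_inverse (amb_mul_ginv gf hgpos y hy)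

lemma amb_inv_eq (hgpos : ∀ ρ v, (gf ρ v).PosDef) (y : Fin (d+2) → ℝ) (hy : y 0 ≠ 0) :
    (ambMetric gf y)⁻¹ = ginvM gf y :=
  Matrix.inv_eq_right_inv (amb_mul_ginv gf hgpos y hy)


lemma chris_symm (g : MetricField (d+2)) (hsym : ∀ y I J, g y I J = g y J I)
    (L i j : Fin (d+2)) (y : Fin (d+2) → ℝ) :
    Christoffel g L i j y = Christoffel g L j i y := by
  unfold Christoffel
  exact Finset.sum_congr rfl fun K _ => by rw [CL_symm g hsym i j K y]

lemma chris_row0 (hgs : ∀ i j, ContDiff ℝ (⊤ : ℕ∞) fun p : ℝ × (Fin d → ℝ) => gf p.1 p.2 i j)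
    (hgsym : ∀ ρ v, (gf ρ v).IsSymm) (hgpos : ∀ ρ v, (gf ρ v).PosDef)
    (y : Fin (d+2) → ℝ) (hy : y 0 ≠ 0) (L I : Fin (d+2)) :
    Christoffel (ambMetric gf) L 0 I y = (if L = I ∧ ¬ I = 0 then 1 else 0) * (y 0)⁻¹ := by
  have hinv : (ambMetric gf y)⁻¹ * ambMetric gf y = 1 :=
    Matrix.nonsing_inv_mul _ (amb_isUnit_det gf hgpos y hy)
  have e1 : ∀ J : Fin (d+2), ∑ K, (ambMetric gf y)⁻¹ L K * ambMetric gf y K J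
      = (1 : Matrix (Fin (d+2)) (Fin (d+2)) ℝ) L J := by
    intro J; rw [← Matrix.mul_apply, hinv]
  have hCL : ∀ K, ChristoffelLow (ambMetric gf) 0 I K y
      = (ambMetric gf y K I - (if I = 0 then 1 else 0) * ambMetric gf y K 0) * (y 0)⁻¹ := by
    intro K
    have h := CL0 gf hgs I K y
    have h2 : ChristoffelLow (ambMetric gf) 0 I K y
        = (ambMetric gf y I K - (if I = 0 then ambMetric gf y 0 K else 0)) * (y 0)⁻¹ := by
      rw [← h, mul_assoc, mul_inv_cancel₀ hy, mul_one]
    rw [h2, amb_symm gf hgsym y I K, amb_symm gf hgsym y 0 K]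
    split <;> ring
  unfold Christoffel
  have step : ∑ K, (ambMetric gf y)⁻¹ L K * ChristoffelLow (ambMetric gf) 0 I K y
      = ((∑ K, (ambMetric gf y)⁻¹ L K * ambMetric gf y K I)
        - (if I = 0 then 1 else 0) * (∑ K, (ambMetric gf y)⁻¹ L K * ambMetric gf y K 0))
          * (y 0)⁻¹ := by
    simp only [hCL]
    rw [Finset.mul_sum, ← Finset.sum_sub_distrib, Finset.sum_mul]
    apply Finset.sum_congr rfl; intro K _; ring
  rw [step, e1 I, e1 0, Matrix.one_apply, Matrix.one_apply]
  by_cases hI : I = 0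
  · subst hI; simp
  · simp only [hI, if_false, if_neg hI]
    by_cases hL : L = I <;> simp [hL, hI]


-- CL values needed for the z-row
lemma CL_z_e0 (j : Fin d) (y) :
    ChristoffelLow (ambMetric gf) (Fin.last (d+1)) (emb j) 0 y = 0 := by
  simp only [ChristoffelLow, pd_ge0, pd_gz0, pd_gze]
  simp [zero_ne_emb]
lemma CL_z_ez (j : Fin d) (y) :
    ChristoffelLow (ambMetric gf) (Fin.last (d+1)) (emb j) (Fin.last (d+1)) y = 0 := by
  simp only [ChristoffelLow, pd_gez, pd_gzz, pd_gze]
  simp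
lemma CL_z_z0 (y : Fin (d+2) → ℝ) :
    ChristoffelLow (ambMetric gf) (Fin.last (d+1)) (Fin.last (d+1)) 0 y = 0 := by
  simp only [ChristoffelLow, pd_gz0, pd_gzz]
  simp [zero_ne_last]
lemma CL_z_zz (y : Fin (d+2) → ℝ) :
    ChristoffelLow (ambMetric gf) (Fin.last (d+1)) (Fin.last (d+1)) (Fin.last (d+1)) y = 0 := by
  simp only [ChristoffelLow, pd_gzz]
  simp

-- the z-row Christoffels vanish for I ≠ 0
lemma chris_z (hgpos : ∀ ρ v, (gf ρ v).PosDef) (y : Fin (d+2) → ℝ) (hy : y 0 ≠ 0)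
    (I : Fin (d+2)) (hI : I = Fin.last (d+1) ∨ ∃ j, I = emb j) :
    Christoffel (ambMetric gf) (Fin.last (d+1)) (Fin.last (d+1)) I y = 0 := by
  unfold Christoffel
  rw [amb_inv_eq gf hgpos y hy, sum_decomp]
  have h1 : ∀ k : Fin d, ginvM gf y (Fin.last (d+1)) (emb k)
      * ChristoffelLow (ambMetric gf) (Fin.last (d+1)) I (emb k) y = 0 := by
    intro k; rw [ginv_ze]; ring
  rcases hI with rfl | ⟨j, rfl⟩ <;>
    simp [h1, CL_z_e0, CL_z_ez, CL_z_z0, CL_z_zz]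

-- CL values for the emb-rows
lemma CL_e_ee (hgs : ∀ i j, ContDiff ℝ (⊤ : ℕ∞) fun p : ℝ × (Fin d → ℝ) => gf p.1 p.2 i j)
    (k j l : Fin d) (y : Fin (d+2) → ℝ) :
    ChristoffelLow (ambMetric gf) (emb k) (emb j) (emb l) y
      = (y 0 * y 0) * ((Gd gf (emb k) j l (phiL d y) + Gd gf (emb j) k l (phiL d y)
          - Gd gf (emb l) k j (phiL d y)) / 2) := by
  simp only [ChristoffelLow, pd_ee gf hgs]
  simp [zero_ne_emb]
  ring
lemma CL_e_ze (hgs : ∀ i j, ContDiff ℝ (⊤ : ℕ∞) fun p : ℝ × (Fin d → ℝ) => gf p.1 p.2 i j)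
    (k l : Fin d) (y : Fin (d+2) → ℝ) :
    ChristoffelLow (ambMetric gf) (emb k) (Fin.last (d+1)) (emb l) y
      = (y 0 * y 0) * (Gd gf (Fin.last (d+1)) k l (phiL d y) / 2) := by
  simp only [ChristoffelLow, pd_gze, pd_gez, pd_ee gf hgs]
  simp [zero_ne_last]
  ring

def CfnE (k j : Fin d) : ℝ × (Fin d → ℝ) → ℝ := fun p =>
  ∑ l, (gf p.1 p.2)⁻¹ k l * ((Gd gf (emb k) j l p + Gd gf (emb j) k l p
    - Gd gf (emb l) k j p) / 2)
def CfnZ (k : Fin d) : ℝ × (Fin d → ℝ) → ℝ := fun p =>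
  ∑ l, (gf p.1 p.2)⁻¹ k l * (Gd gf (Fin.last (d+1)) k l p / 2)

lemma chris_e (hgs : ∀ i j, ContDiff ℝ (⊤ : ℕ∞) fun p : ℝ × (Fin d → ℝ) => gf p.1 p.2 i j)
    (hgpos : ∀ ρ v, (gf ρ v).PosDef) (y : Fin (d+2) → ℝ) (hy : y 0 ≠ 0)
    (k : Fin d) (I : Fin (d+2)) (hI : I = Fin.last (d+1) ∨ ∃ j, I = emb j) :
    Christoffel (ambMetric gf) (emb k) (emb k) I y
      = (if I = Fin.last (d+1) then CfnZ gf k (phiL d y) else 0)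
        + ∑ j, (if I = emb j then CfnE gf k j (phiL d y) else 0) := by
  unfold Christoffel
  rw [amb_inv_eq gf hgpos y hy, sum_decomp, ginv_e0, ginv_ez]
  have hsq : ((y 0)^2)⁻¹ * (y 0 * y 0) = 1 := by
    rw [← pow_two]; exact inv_mul_cancel₀ (pow_ne_zero 2 hy)
  have hfst : (phiL d y).1 = y (Fin.last (d+1)) := rfl
  have hsnd : (phiL d y).2 = mcoord y := rfl
  rcases hI with rfl | ⟨j, rfl⟩
  · have hL : ∀ l : Fin d, ginvM gf y (emb k) (emb l)
        * ChristoffelLow (ambMetric gf) (emb k) (Fin.last (d+1)) (emb l) y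
        = (gf (y (Fin.last (d+1))) (mcoord y))⁻¹ k l
          * (Gd gf (Fin.last (d+1)) k l (phiL d y) / 2) := by
      intro l
      rw [ginv_ee, CL_e_ze gf hgs,
        show ∀ a b : ℝ, (((y 0)^2)⁻¹ * a) * ((y 0 * y 0) * b)
          = (((y 0)^2)⁻¹ * (y 0 * y 0)) * (a * b) from fun a b => by ring, hsq, one_mul]
    simp only [hL, last_ne_emb, if_false, zero_mul, add_zero, zero_add, Finset.sum_const_zero]
    rw [if_pos trivial]
    rfl
  · have hL : ∀ l : Fin d, ginvM gf y (emb k) (emb l)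
        * ChristoffelLow (ambMetric gf) (emb k) (emb j) (emb l) y
        = (gf (y (Fin.last (d+1))) (mcoord y))⁻¹ k l
          * ((Gd gf (emb k) j l (phiL d y) + Gd gf (emb j) k l (phiL d y)
            - Gd gf (emb l) k j (phiL d y)) / 2) := by
      intro l
      rw [ginv_ee, CL_e_ee gf hgs,
        show ∀ a b : ℝ, (((y 0)^2)⁻¹ * a) * ((y 0 * y 0) * b)
          = (((y 0)^2)⁻¹ * (y 0 * y 0)) * (a * b) from fun a b => by ring, hsq, one_mul]
    have hsum : (∑ j' : Fin d, if emb j = emb j' then CfnE gf k j' (phiL d y) else 0)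
        = CfnE gf k j (phiL d y) := by
      rw [Finset.sum_eq_single j]
      · simp
      · intro j' _ hj'; rw [if_neg (fun h => hj' (emb_inj h).symm)]
      · simp
    simp only [hL, emb_ne_last, if_false, zero_mul, add_zero, zero_add]
    rw [hsum]
    rfl


-- analytic helper lemmas
lemma pd_congr_nhds {n : ℕ} {f h : (Fin n → ℝ) → ℝ} {x : Fin n → ℝ} (A : Fin n)
    (hfh : ∀ᶠ y in nhds x, f y = h y) : pd A f x = pd A h x := by
  rw [pd, pd, Filter.EventuallyEq.fderiv_eq hfh]

lemma U_mem_nhds {x : Fin (d+2) → ℝ} (hx : x 0 ≠ 0) :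
    {y : Fin (d+2) → ℝ | y 0 ≠ 0} ∈ nhds x := by
  have h1 : IsOpen ((fun y : Fin (d+2) → ℝ => y 0) ⁻¹' ({0}ᶜ)) :=
    (isOpen_compl_singleton (x := (0:ℝ))).preimage (continuous_apply 0)
  exact h1.mem_nhds hx

lemma pd_invariant_zero {n : ℕ} (f : (Fin n → ℝ) → ℝ) (A : Fin n) (x : Fin n → ℝ)
    (h : ∀ (y : Fin n → ℝ) (t : ℝ), f (y + t • (Pi.single A 1 : Fin n → ℝ)) = f y) :
    pd A f x = 0 := by
  rw [pd]
  by_cases hd : DifferentiableAt ℝ f x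
  · have hc : HasDerivAt (fun t : ℝ => x + t • (Pi.single A 1 : Fin n → ℝ))
        (Pi.single A 1) 0 := by
      simpa using ((hasDerivAt_id (0:ℝ)).smul_const (Pi.single A 1 : Fin n → ℝ)).const_add x
    have h1 : HasDerivAt (fun t : ℝ => f (x + t • (Pi.single A 1 : Fin n → ℝ)))
        (fderiv ℝ f x (Pi.single A 1)) 0 := by
      have hd' : HasFDerivAt f (fderiv ℝ f x) (x + (0:ℝ) • (Pi.single A 1 : Fin n → ℝ)) := by
        simpa using hd.hasFDerivAt
      exact hd'.comp_hasDerivAt 0 hc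
    have h2 : (fun t : ℝ => f (x + t • (Pi.single A 1 : Fin n → ℝ))) = fun _ => f x := by
      funext t; rw [h x t]
    rw [h2] at h1
    have h3 : HasDerivAt (fun _ : ℝ => f x) 0 0 := hasDerivAt_const 0 (f x)
    exact h1.unique h3
  · rw [fderiv_zero_of_not_differentiableAt hd]; simp

lemma comp_phiL_invariant (F : ℝ × (Fin d → ℝ) → ℝ) (y : Fin (d+2) → ℝ) (t : ℝ) :
    F (phiL d (y + t • (Pi.single (0 : Fin (d+2)) 1 : Fin (d+2) → ℝ))) = F (phiL d y) := by
  rw [map_add, _root_.map_smul, phiL_single_zero]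
  simp

lemma pd_inv0 {x : Fin (d+2) → ℝ} (hx : x 0 ≠ 0) (A : Fin (d+2)) :
    pd A (fun y : Fin (d+2) → ℝ => (y 0)⁻¹) x
      = -((x 0)^2)⁻¹ * (if (0:Fin (d+2)) = A then 1 else 0) := by
  have hp : HasFDerivAt (fun y : Fin (d+2) → ℝ => y 0)
      (ContinuousLinearMap.proj 0 : (Fin (d+2) → ℝ) →L[ℝ] ℝ) x :=
    (ContinuousLinearMap.proj 0 : (Fin (d+2) → ℝ) →L[ℝ] ℝ).hasFDerivAt
  have h : HasFDerivAt (fun y : Fin (d+2) → ℝ => (y 0)⁻¹)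
      ((-(x 0 ^ 2)⁻¹) • (ContinuousLinearMap.proj 0 : (Fin (d+2) → ℝ) →L[ℝ] ℝ)) x :=
    (hasDerivAt_inv hx).comp_hasFDerivAt x hp
  rw [pd, h.fderiv]
  simp [Pi.single_apply]


section hess
variable (ff : ℝ → (Fin d → ℝ) → ℝ)

def Ff : ℝ × (Fin d → ℝ) → ℝ := fun p => ff p.1 p.2
def Fd (K : Fin (d+2)) : ℝ × (Fin d → ℝ) → ℝ :=
  fun p => fderiv ℝ (Ff ff) p (phiL d (Pi.single K 1))

lemma Fd_zero (p : ℝ × (Fin d → ℝ)) : Fd ff 0 p = 0 := by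
  rw [Fd, phiL_single_zero]; simp

lemma hasFDeriv_ambF (hfs : ContDiff ℝ (⊤ : ℕ∞) fun p : ℝ × (Fin d → ℝ) => ff p.1 p.2)
    (y : Fin (d+2) → ℝ) :
    HasFDerivAt (ambF ff)
      ((y 0) • ((fderiv ℝ (Ff ff) (phiL d y)).comp (phiL d))
        + (Ff ff (phiL d y)) • (ContinuousLinearMap.proj 0 : (Fin (d+2) → ℝ) →L[ℝ] ℝ)) y := by
  have hp : HasFDerivAt (fun y : Fin (d+2) → ℝ => y 0)
      (ContinuousLinearMap.proj 0 : (Fin (d+2) → ℝ) →L[ℝ] ℝ) y :=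
    (ContinuousLinearMap.proj 0 : (Fin (d+2) → ℝ) →L[ℝ] ℝ).hasFDerivAt
  have hG : HasFDerivAt (fun y => Ff ff (phiL d y))
      ((fderiv ℝ (Ff ff) (phiL d y)).comp (phiL d)) y :=
    ((hfs.differentiable (by simp) (phiL d y)).hasFDerivAt).comp y (phiL d).hasFDerivAt
  exact hp.mul hG

lemma pd_ambF (hfs : ContDiff ℝ (⊤ : ℕ∞) fun p : ℝ × (Fin d → ℝ) => ff p.1 p.2)
    (K : Fin (d+2)) (y : Fin (d+2) → ℝ) :
    pd K (ambF ff) y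
      = (if (0:Fin (d+2)) = K then 1 else 0) * Ff ff (phiL d y)
        + y 0 * Fd ff K (phiL d y) := by
  rw [pd, (hasFDeriv_ambF ff hfs y).fderiv]
  simp [Fd, Pi.single_apply]
  split <;> ring

lemma pd_pd_ambF (hfs : ContDiff ℝ (⊤ : ℕ∞) fun p : ℝ × (Fin d → ℝ) => ff p.1 p.2)
    (I : Fin (d+2)) (x : Fin (d+2) → ℝ) :
    pd 0 (fun y => pd I (ambF ff) y) x = Fd ff I (phiL d x) := by
  have hfun : (fun y => pd I (ambF ff) y)
      = fun y => (if (0:Fin (d+2)) = I then 1 else 0) * Ff ff (phiL d y)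
        + y 0 * Fd ff I (phiL d y) := funext (pd_ambF ff hfs I)
  rw [hfun]
  have hFdsmooth : ContDiff ℝ (⊤ : ℕ∞) (Fd ff I) :=
    (hfs.fderiv_right ((by simp))).clm_apply contDiff_const
  have hp : HasFDerivAt (fun y : Fin (d+2) → ℝ => y 0)
      (ContinuousLinearMap.proj 0 : (Fin (d+2) → ℝ) →L[ℝ] ℝ) x :=
    (ContinuousLinearMap.proj 0 : (Fin (d+2) → ℝ) →L[ℝ] ℝ).hasFDerivAt
  have hG : HasFDerivAt (fun y => Ff ff (phiL d y))
      ((fderiv ℝ (Ff ff) (phiL d x)).comp (phiL d)) x :=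
    ((hfs.differentiable (by simp) (phiL d x)).hasFDerivAt).comp x (phiL d).hasFDerivAt
  have hH : HasFDerivAt (fun y => Fd ff I (phiL d y))
      ((fderiv ℝ (Fd ff I) (phiL d x)).comp (phiL d)) x :=
    ((hFdsmooth.differentiable (by simp) (phiL d x)).hasFDerivAt).comp x (phiL d).hasFDerivAt
  have htotal := (hG.const_mul (if (0:Fin (d+2)) = I then (1:ℝ) else 0)).add (hp.mul hH)

  rw [pd, (show HasFDerivAt (fun y : Fin (d+2) → ℝ => (if (0:Fin (d+2)) = I then (1:ℝ) else 0)
    * Ff ff (phiL d y) + y 0 * Fd ff I (phiL d y)) _ x from htotal).fderiv]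
  simp only [ContinuousLinearMap.add_apply, ContinuousLinearMap.smul_apply,
    ContinuousLinearMap.comp_apply, ContinuousLinearMap.coe_smul', Pi.smul_apply,
    ContinuousLinearMap.proj_apply, phiL_single_zero]
  simp [Pi.single_apply, last_ne_zero']

lemma hess_row (hgs : ∀ i j, ContDiff ℝ (⊤ : ℕ∞) fun p : ℝ × (Fin d → ℝ) => gf p.1 p.2 i j)
    (hgsym : ∀ ρ v, (gf ρ v).IsSymm) (hgpos : ∀ ρ v, (gf ρ v).PosDef)
    (hfs : ContDiff ℝ (⊤ : ℕ∞) fun p : ℝ × (Fin d → ℝ) => ff p.1 p.2)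
    (x : Fin (d+2) → ℝ) (hx : x 0 ≠ 0) (I : Fin (d+2)) :
    HessT (ambMetric gf) (ambF ff) 0 I x = 0 := by
  unfold HessT
  rw [pd_pd_ambF ff hfs I x]
  have hsum : ∑ K, Christoffel (ambMetric gf) K 0 I x * pd K (ambF ff) x
      = (if I = 0 then 0 else pd I (ambF ff) x * (x 0)⁻¹) := by
    have h1 : ∀ K, Christoffel (ambMetric gf) K 0 I x * pd K (ambF ff) x
        = if K = I then (if I = 0 then 0 else pd K (ambF ff) x * (x 0)⁻¹) else 0 := by
      intro K
      rw [chris_row0 gf hgs hgsym hgpos x hx K I]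
      by_cases hKI : K = I
      · subst hKI
        by_cases hI : K = 0 <;> simp [hI] <;> ring
      · simp [hKI]
    simp only [h1, Finset.sum_ite_eq' Finset.univ I]
    simp
  rw [hsum]
  by_cases hI : I = 0
  · subst hI
    simp [Fd_zero]
  · rw [if_neg hI, pd_ambF ff hfs I x]
    rw [if_neg (Ne.symm hI)]
    field_simp
    ring

end hess

lemma pd_cmul_inv {x : Fin (d+2) → ℝ} (hx : x 0 ≠ 0) (c : ℝ) (A : Fin (d+2)) :
    pd A (fun y : Fin (d+2) → ℝ => c * (y 0)⁻¹) x
      = c * (-((x 0)^2)⁻¹) * (if (0:Fin (d+2)) = A then 1 else 0) := by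
  have hp : HasFDerivAt (fun y : Fin (d+2) → ℝ => y 0)
      (ContinuousLinearMap.proj 0 : (Fin (d+2) → ℝ) →L[ℝ] ℝ) x :=
    (ContinuousLinearMap.proj 0 : (Fin (d+2) → ℝ) →L[ℝ] ℝ).hasFDerivAt
  have h : HasFDerivAt (fun y : Fin (d+2) → ℝ => (y 0)⁻¹)
      ((-(x 0 ^ 2)⁻¹) • (ContinuousLinearMap.proj 0 : (Fin (d+2) → ℝ) →L[ℝ] ℝ)) x :=
    (hasDerivAt_inv hx).comp_hasFDerivAt x hp
  rw [pd, fderiv_const_mul h.differentiableAt c, h.fderiv]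
  simp [Pi.single_apply]

lemma ric_row (hgs : ∀ i j, ContDiff ℝ (⊤ : ℕ∞) fun p : ℝ × (Fin d → ℝ) => gf p.1 p.2 i j)
    (hgsym : ∀ ρ v, (gf ρ v).IsSymm) (hgpos : ∀ ρ v, (gf ρ v).PosDef)
    (x : Fin (d+2) → ℝ) (hx : x 0 ≠ 0) (I : Fin (d+2)) :
    RicciT (ambMetric gf) 0 I x = 0 := by
  have hsym : ∀ (y : Fin (d+2) → ℝ) (A B : Fin (d+2)),
      ambMetric gf y A B = ambMetric gf y B A := fun y A B => amb_symm gf hgsym y A B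
  have hUev : ∀ (f h : (Fin (d+2) → ℝ) → ℝ), (∀ y, y 0 ≠ 0 → f y = h y) →
      ∀ᶠ y in nhds x, f y = h y :=
    fun f h hfh => Filter.eventually_of_mem (U_mem_nhds hx) (fun y hy => hfh y hy)
  have t1 : (∑ l, pd l (fun y => Christoffel (ambMetric gf) l 0 I y) x) = 0 := by
    apply Finset.sum_eq_zero; intro L _
    have he : pd L (fun y => Christoffel (ambMetric gf) L 0 I y) x
        = pd L (fun y : Fin (d+2) → ℝ =>
            (if L = I ∧ ¬ I = 0 then (1:ℝ) else 0) * (y 0)⁻¹) x :=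
      pd_congr_nhds L (hUev _ _ (fun y hy => chris_row0 gf hgs hgsym hgpos y hy L I))
    rw [he, pd_cmul_inv hx]
    by_cases hL : (0:Fin (d+2)) = L
    · subst hL
      by_cases hI : I = 0
      · simp [hI]
      · rw [if_neg (show ¬((0:Fin (d+2)) = I ∧ ¬ I = 0) from fun h => hI h.1.symm)]
        simp
    · simp [hL]
  have t2 : (∑ l, pd 0 (fun y => Christoffel (ambMetric gf) l l I y) x)
      = if I = 0 then -((d:ℝ)+1) * ((x 0)^2)⁻¹ else 0 := by
    by_cases hI : I = 0
    · subst hI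
      rw [if_pos rfl]
      have hterm : ∀ L : Fin (d+2), pd 0 (fun y => Christoffel (ambMetric gf) L L 0 y) x
          = (if ¬ L = 0 then (1:ℝ) else 0) * (-((x 0)^2)⁻¹) := by
        intro L
        have hfun : (fun y => Christoffel (ambMetric gf) L L 0 y)
            = fun y => Christoffel (ambMetric gf) L 0 L y :=
          funext fun y => chris_symm _ hsym L L 0 y
        rw [hfun]
        have he : pd 0 (fun y => Christoffel (ambMetric gf) L 0 L y) x
            = pd 0 (fun y : Fin (d+2) → ℝ =>
                (if L = L ∧ ¬ L = 0 then (1:ℝ) else 0) * (y 0)⁻¹) x :=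
          pd_congr_nhds 0 (hUev _ _ (fun y hy => chris_row0 gf hgs hgsym hgpos y hy L L))
        rw [he, pd_cmul_inv hx]
        simp
      simp only [hterm]
      rw [sum_decomp]
      simp [emb_ne_zero, last_ne_zero']
      ring
    · rw [if_neg hI]
      have hI' : I = Fin.last (d+1) ∨ ∃ j, I = emb j :=
        ((cases3 I).resolve_left hI).symm
      rw [sum_decomp]
      have h0 : pd 0 (fun y => Christoffel (ambMetric gf) 0 0 I y) x = 0 := by
        have he : pd 0 (fun y => Christoffel (ambMetric gf) 0 0 I y) x
            = pd 0 (fun y : Fin (d+2) → ℝ =>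
                (if (0:Fin (d+2)) = I ∧ ¬ I = 0 then (1:ℝ) else 0) * (y 0)⁻¹) x :=
          pd_congr_nhds 0 (hUev _ _ (fun y hy => chris_row0 gf hgs hgsym hgpos y hy 0 I))
        rw [he, pd_cmul_inv hx]
        rw [if_neg (show ¬((0:Fin (d+2)) = I ∧ ¬ I = 0) from fun h => hI h.1.symm)]
        simp
      have hz : pd 0 (fun y => Christoffel (ambMetric gf)
          (Fin.last (d+1)) (Fin.last (d+1)) I y) x = 0 := by
        have he : pd 0 (fun y => Christoffel (ambMetric gf)
            (Fin.last (d+1)) (Fin.last (d+1)) I y) x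
            = pd 0 (fun _ : Fin (d+2) → ℝ => (0:ℝ)) x :=
          pd_congr_nhds 0 (hUev _ _ (fun y hy => chris_z gf hgpos y hy I hI'))
        rw [he, pd_zero_fun]
      have hek : ∀ k : Fin d, pd 0 (fun y => Christoffel (ambMetric gf)
          (emb k) (emb k) I y) x = 0 := by
        intro k
        have he : pd 0 (fun y => Christoffel (ambMetric gf) (emb k) (emb k) I y) x
            = pd 0 (fun y : Fin (d+2) → ℝ =>
                (if I = Fin.last (d+1) then CfnZ gf k (phiL d y) else 0)
                  + ∑ j, (if I = emb j then CfnE gf k j (phiL d y) else 0)) x :=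
          pd_congr_nhds 0 (hUev _ _ (fun y hy => chris_e gf hgs hgpos y hy k I hI'))
        rw [he]
        exact pd_invariant_zero _ 0 x (fun y t =>
          comp_phiL_invariant (fun p => (if I = Fin.last (d+1) then CfnZ gf k p else 0)
            + ∑ j, (if I = emb j then CfnE gf k j p else 0)) y t)
      rw [h0, hz]
      simp [hek]
  have t3 : (∑ p, ∑ l, Christoffel (ambMetric gf) p 0 I x
        * Christoffel (ambMetric gf) l l p x)
      = if I = 0 then 0 else (x 0)⁻¹ * ∑ l, Christoffel (ambMetric gf) l l I x := by
    by_cases hI : I = 0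
    · subst hI
      rw [if_pos rfl]
      apply Finset.sum_eq_zero; intro p _
      apply Finset.sum_eq_zero; intro l _
      rw [chris_row0 gf hgs hgsym hgpos x hx p 0]
      simp
    · rw [if_neg hI]
      have h1 : ∀ p, (∑ l, Christoffel (ambMetric gf) p 0 I x
            * Christoffel (ambMetric gf) l l p x)
          = if p = I then (x 0)⁻¹ * ∑ l, Christoffel (ambMetric gf) l l I x else 0 := by
        intro p
        rw [chris_row0 gf hgs hgsym hgpos x hx p I]
        by_cases hp : p = I
        · subst hp
          simp [hI, Finset.mul_sum]
        · simp [hp]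
      rw [Finset.sum_congr rfl (fun p _ => h1 p), Finset.sum_ite_eq' Finset.univ I]
      simp
  have t4 : (∑ p, ∑ l, Christoffel (ambMetric gf) p l I x
        * Christoffel (ambMetric gf) l 0 p x)
      = if I = 0 then ((d:ℝ)+1) * ((x 0)^2)⁻¹
        else (x 0)⁻¹ * ∑ l, Christoffel (ambMetric gf) l l I x := by
    have h1 : ∀ p, (∑ l, Christoffel (ambMetric gf) p l I x
          * Christoffel (ambMetric gf) l 0 p x)
        = if p = 0 then 0 else Christoffel (ambMetric gf) p p I x * (x 0)⁻¹ := by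
      intro p
      have h2 : ∀ l, Christoffel (ambMetric gf) p l I x
            * Christoffel (ambMetric gf) l 0 p x
          = if l = p then (if p = 0 then 0
              else Christoffel (ambMetric gf) p p I x * (x 0)⁻¹) else 0 := by
        intro l
        rw [chris_row0 gf hgs hgsym hgpos x hx l p]
        by_cases hlp : l = p
        · subst hlp
          by_cases hp0 : l = 0 <;> simp [hp0] <;> ring
        · simp [hlp]
      rw [Finset.sum_congr rfl (fun l _ => h2 l), Finset.sum_ite_eq' Finset.univ p]
      simp
    rw [Finset.sum_congr rfl (fun p _ => h1 p), sum_decomp]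
    by_cases hI : I = 0
    · subst hI
      rw [if_pos rfl]
      have hv : ∀ p : Fin (d+2), ¬ p = 0 → Christoffel (ambMetric gf) p p 0 x = (x 0)⁻¹ := by
        intro p hp
        rw [chris_symm _ (hsym) p p 0 x, chris_row0 gf hgs hgsym hgpos x hx p p]
        simp [hp]
      simp only [if_pos rfl, if_neg (emb_ne_zero _), if_neg last_ne_zero']
      rw [Finset.sum_congr rfl (fun k _ => by rw [hv _ (emb_ne_zero k)]),
        hv _ last_ne_zero', Finset.sum_const, Finset.card_univ, Fintype.card_fin,
        nsmul_eq_mul, pow_two, mul_inv]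
      ring_nf
      rw [if_pos trivial]
    · rw [if_neg hI]
      have h0 : Christoffel (ambMetric gf) 0 0 I x = 0 := by
        rw [chris_row0 gf hgs hgsym hgpos x hx 0 I]
        rw [if_neg (show ¬((0:Fin (d+2)) = I ∧ ¬ I = 0) from fun h => hI h.1.symm)]
        simp
      rw [show (∑ l, Christoffel (ambMetric gf) l l I x)
          = Christoffel (ambMetric gf) 0 0 I x
            + (∑ k : Fin d, Christoffel (ambMetric gf) (emb k) (emb k) I x)
            + Christoffel (ambMetric gf) (Fin.last (d+1)) (Fin.last (d+1)) I x
        from sum_decomp _, h0]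
      simp only [if_pos rfl, if_neg (emb_ne_zero _), if_neg last_ne_zero', if_true,
        mul_add, Finset.mul_sum, mul_zero, zero_add]
      rw [Finset.sum_congr rfl (fun (k : Fin d) _ =>
        mul_comm (Christoffel (ambMetric gf) (emb k) (emb k) I x) ((x 0)⁻¹))]
      ring
  unfold RicciT
  rw [t1, t2, t3, t4]
  by_cases hI : I = 0
  · simp [hI]
    ring
  · simp [hI]

end SN

/-- For the straight and normal data `g̃ = 2ρ dt² + 2t dρ dt + t² g_ρ`,
`f̃ = t f_ρ`, the components `(Ric̃_φ^m)_{0I}` of the Bakry–Émery Ricci tensor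
`Ric(g̃) - (m/f̃)∇̃²f̃` vanish for all `I`. -/
theorem straight_normal_ric_zero_row {d : ℕ}
    (gf : ℝ → (Fin d → ℝ) → Matrix (Fin d) (Fin d) ℝ)
    (ff : ℝ → (Fin d → ℝ) → ℝ) (m : ℝ)
    (hgs : ∀ i j, ContDiff ℝ (⊤ : ℕ∞) fun p : ℝ × (Fin d → ℝ) => gf p.1 p.2 i j)
    (hfs : ContDiff ℝ (⊤ : ℕ∞) fun p : ℝ × (Fin d → ℝ) => ff p.1 p.2)
    (hgsym : ∀ ρ y, (gf ρ y).IsSymm) (hgpos : ∀ ρ y, (gf ρ y).PosDef)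
    (hff : ∀ ρ y, 0 < ff ρ y) :
    ∀ x : Fin (d + 2) → ℝ, 0 < x 0 →
      ∀ I : Fin (d + 2), BERic (ambMetric gf) m (ambF ff) 0 I x = 0 := by
  intro x hx I
  unfold BERic
  rw [SN.ric_row gf hgs hgsym hgpos x (ne_of_gt hx) I,
    SN.hess_row gf ff hgs hgsym hgpos hfs x (ne_of_gt hx) I]
  ring
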